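/- In an SGF-quantale, if f ∼_p g (f and g are incident at the prime p) then f[p] = g[p], where f[p] is the unique prime q with r(f) ≰ q and p·f = f·q. -/
import Mathlib


/-- A unital involutive quantale. The multiplicative unit `1` plays the role of `e`. -/
class UIQuantale (Q : Type*) extends CompleteLattice Q, Monoid Q, StarMul Q where
  mul_sSup : ∀ (a : Q) (s : Set Q), a * sSup s = ⨆ b ∈ s, a * b
  sSup_mul : ∀ (a : Q) (s : Set Q), sSup s * a = ⨆ b ∈ s, b * a
  star_sSup : ∀ (s : Set Q), star (sSup s) = ⨆ b ∈ s, star b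

/-- A partial unit: both `f` and `star f` are functional. -/
def IsPU {Q : Type*} [UIQuantale Q] (f : Q) : Prop :=
  star f * f ≤ 1 ∧ f * star f ≤ 1

/-- A prime element of `Q_e`. -/
def IsPrimeE {Q : Type*} [UIQuantale Q] (p : Q) : Prop :=
  p ≤ 1 ∧ p ≠ 1 ∧ ∀ h k : Q, h ≤ 1 → k ≤ 1 → h ⊓ k ≤ p → h ≤ p ∨ k ≤ p

/-- An SGF-quantale: a unital involutive quantale which is join-generated by its
partial units (SGF1), satisfies `f = f f* f` for partial units (SGF2), and the
separation axiom SGF3. -/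
class SGFQuantale (Q : Type*) extends UIQuantale Q where
  sgf1 : ∀ a : Q, a = sSup {f | IsPU f ∧ f ≤ a}
  sgf2 : ∀ f : Q, IsPU f → f * star f * f = f
  sgf3 : ∀ f g h : Q, IsPU f → IsPU g → h ≤ 1 → f ≤ h * ⊤ ⊔ g → f ≤ h * f ⊔ g

/-- The incidence relation: `f` and `g` are incident at `p` if some `h ≤ d(f) ⊓ d(g)`
with `h ≰ p` satisfies `h f ≤ p f ⊔ g`. -/
def Incident {Q : Type*} [SGFQuantale Q] (p f g : Q) : Prop :=
  ∃ h : Q, h ≤ (f * star f) ⊓ (g * star g) ∧ ¬ h ≤ p ∧ h * f ≤ p * f ⊔ g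

section Helpers

variable {Q : Type*} [UIQuantale Q]

lemma UIQ.dist_l (a b c : Q) : a * (b ⊔ c) = a * b ⊔ a * c := by
  have h := UIQuantale.mul_sSup a {b, c}
  rw [sSup_pair] at h
  exact h.trans iSup_pair

lemma UIQ.dist_r (a b c : Q) : (b ⊔ c) * a = b * a ⊔ c * a := by
  have h := UIQuantale.sSup_mul a {b, c}
  rw [sSup_pair] at h
  exact h.trans iSup_pair

lemma UIQ.star_sup (a b : Q) : star (a ⊔ b) = star a ⊔ star b := by
  have h := UIQuantale.star_sSup ({a, b} : Set Q)
  rw [sSup_pair] at h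
  exact h.trans iSup_pair

lemma UIQ.mul_mono {a b c d : Q} (h1 : a ≤ b) (h2 : c ≤ d) : a * c ≤ b * d := by
  have e1 : a * c ≤ b * c := by
    have h : (a ⊔ b) * c = a * c ⊔ b * c := UIQ.dist_r c a b
    rw [sup_eq_right.mpr h1] at h
    exact le_sup_left.trans h.ge
  have e2 : b * c ≤ b * d := by
    have h : b * (c ⊔ d) = b * c ⊔ b * d := UIQ.dist_l b c d
    rw [sup_eq_right.mpr h2] at h
    exact le_sup_left.trans h.ge
  exact e1.trans e2

lemma UIQ.star_mono {a b : Q} (h : a ≤ b) : star a ≤ star b := by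
  have h2 : star (a ⊔ b) = star a ⊔ star b := UIQ.star_sup a b
  rw [sup_eq_right.mpr h] at h2
  exact le_sup_left.trans h2.ge

lemma UIQ.bot_mul (a : Q) : (⊥ : Q) * a = ⊥ := by
  have h := UIQuantale.sSup_mul a (∅ : Set Q)
  simpa using h

lemma UIQ.star_bot : star (⊥ : Q) = ⊥ := by
  have h := UIQuantale.star_sSup (∅ : Set Q)
  simpa using h

end Helpers

section SGFHelpers

open UIQ

variable {Q : Type*} [SGFQuantale Q]

/-- Subunits are idempotent. -/
lemma SGF.sub_idem {a : Q} (ha : a ≤ 1) : a * a = a := by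
  apply le_antisymm
  · calc a * a ≤ 1 * a := UIQ.mul_mono ha le_rfl
      _ = a := one_mul a
  · conv_lhs => rw [SGFQuantale.sgf1 a]
    apply sSup_le
    rintro x ⟨hpu, hxa⟩
    have hx1 : x ≤ 1 := hxa.trans ha
    have hxs : star x ≤ 1 := (UIQ.star_mono hx1).trans (star_one Q).le
    have hxx : x ≤ x * x := by
      conv_lhs => rw [← SGFQuantale.sgf2 x hpu]
      calc x * star x * x ≤ x * 1 * x := UIQ.mul_mono (UIQ.mul_mono le_rfl hxs) le_rfl
        _ = x * x := by rw [mul_one]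
    exact hxx.trans (UIQ.mul_mono hxa hxa)

lemma SGF.sub_le_star {a : Q} (ha : a ≤ 1) : a ≤ star a := by
  conv_lhs => rw [SGFQuantale.sgf1 a]
  apply sSup_le
  rintro x ⟨hpu, hxa⟩
  have hx1 : x ≤ 1 := hxa.trans ha
  have h1 : x ≤ star x := by
    conv_lhs => rw [← SGFQuantale.sgf2 x hpu]
    calc x * star x * x ≤ 1 * star x * 1 := UIQ.mul_mono (UIQ.mul_mono hx1 le_rfl) hx1
      _ = star x := by rw [one_mul, mul_one]
  exact h1.trans (UIQ.star_mono hxa)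

/-- Subunits are self-adjoint. -/
lemma SGF.sub_star {a : Q} (ha : a ≤ 1) : star a = a := by
  have h1 : star a ≤ 1 := (UIQ.star_mono ha).trans (star_one Q).le
  refine le_antisymm ?_ (SGF.sub_le_star ha)
  have h2 := SGF.sub_le_star h1
  rwa [star_star] at h2

/-- For subunits, multiplication is meet. -/
lemma SGF.sub_mul_inf {a b : Q} (ha : a ≤ 1) (hb : b ≤ 1) : a * b = a ⊓ b := by
  apply le_antisymm
  · refine le_inf ?_ ?_
    · calc a * b ≤ a * 1 := UIQ.mul_mono le_rfl hb
        _ = a := mul_one a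
    · calc a * b ≤ 1 * b := UIQ.mul_mono ha le_rfl
        _ = b := one_mul b
  · calc a ⊓ b = (a ⊓ b) * (a ⊓ b) := (SGF.sub_idem (inf_le_left.trans ha)).symm
      _ ≤ a * b := UIQ.mul_mono inf_le_left inf_le_right

/-- The "support" property: a subunit below `p ⊤` is below `p`. -/
lemma SGF.supp_le {a p : Q} (ha : a ≤ 1) (hp : p ≤ 1) (h : a ≤ p * ⊤) : a ≤ p := by
  have hpu : IsPU a := by
    constructor
    · rw [SGF.sub_star ha, SGF.sub_idem ha]; exact ha
    · rw [SGF.sub_star ha, SGF.sub_idem ha]; exact ha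
  have hpub : IsPU (⊥ : Q) := by
    constructor
    · rw [UIQ.star_bot, UIQ.bot_mul]; exact bot_le
    · rw [UIQ.star_bot, UIQ.bot_mul]; exact bot_le
  have h3 := SGFQuantale.sgf3 a ⊥ p hpu hpub hp (by simpa using h)
  calc a ≤ p * a ⊔ ⊥ := h3
    _ = p * a := by rw [sup_bot_eq]
    _ ≤ p * 1 := UIQ.mul_mono le_rfl ha
    _ = p := mul_one p

/-- One-sided key lemma: if `h ≤ d(g)`, `h ≰ p`, `h g ≤ p g ⊔ f`, and
`p f = f q`, `p g = g q'` with `q'` prime, then `q ≤ q'`. -/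
lemma SGF.key {p f g q q' h : Q}
    (hp1 : p ≤ 1) (hq1 : q ≤ 1) (hq' : IsPrimeE q')
    (heqf : p * f = f * q) (heqg : p * g = g * q')
    (hg : IsPU g) (hh : h ≤ g * star g) (hhp : ¬ h ≤ p)
    (hinc : h * g ≤ p * g ⊔ f) : q ≤ q' := by
  have hdg1 : g * star g ≤ 1 := hg.2
  have hrg1 : star g * g ≤ 1 := hg.1
  have hh1 : h ≤ 1 := hh.trans hdg1
  -- x := h * g * q * star g is a subunit
  have hx1 : h * g * q * star g ≤ 1 := by
    calc h * g * q * star g ≤ 1 * g * 1 * star g :=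
        UIQ.mul_mono (UIQ.mul_mono (UIQ.mul_mono hh1 le_rfl) hq1) le_rfl
      _ = g * star g := by rw [one_mul, mul_one]
      _ ≤ 1 := hdg1
  -- x ≤ p, via the support lemma
  have hxp : h * g * q * star g ≤ p := by
    apply SGF.supp_le hx1 hp1
    calc h * g * q * star g ≤ (p * g ⊔ f) * q * star g :=
        UIQ.mul_mono (UIQ.mul_mono hinc le_rfl) le_rfl
      _ = p * g * q * star g ⊔ f * q * star g := by rw [UIQ.dist_r, UIQ.dist_r]
      _ = p * g * q * star g ⊔ p * f * star g := by rw [← heqf]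
      _ ≤ p * ⊤ ⊔ p * ⊤ := by
          apply sup_le_sup
          · have e : p * g * q * star g = p * (g * q * star g) := by
              simp only [mul_assoc]
            rw [e]; exact UIQ.mul_mono le_rfl le_top
          · have e : p * f * star g = p * (f * star g) := by simp only [mul_assoc]
            rw [e]; exact UIQ.mul_mono le_rfl le_top
      _ = p * ⊤ := sup_idem _
  -- s := star g * h * g
  have hs1 : star g * h * g ≤ 1 := by
    calc star g * h * g ≤ star g * 1 * g := UIQ.mul_mono (UIQ.mul_mono le_rfl hh1) le_rfl
      _ = star g * g := by rw [mul_one]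
      _ ≤ 1 := hrg1
  have hsr : star g * h * g ≤ star g * g := by
    calc star g * h * g ≤ star g * 1 * g := UIQ.mul_mono (UIQ.mul_mono le_rfl hh1) le_rfl
      _ = star g * g := by rw [mul_one]
  have hgs : g * (star g * h * g) = h * g := by
    have e1 : g * (star g * h * g) = g * star g * h * g := by simp only [mul_assoc]
    rw [e1]
    have e2 : g * star g * h = h := by
      rw [SGF.sub_mul_inf hdg1 hh1]; exact inf_eq_right.mpr hh
    rw [e2]
  -- u := s * q
  have hu1 : star g * h * g * q ≤ 1 := by
    calc star g * h * g * q ≤ 1 * 1 := UIQ.mul_mono hs1 hq1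
      _ = 1 := one_mul 1
  have hurg : star g * h * g * q ≤ star g * g := by
    calc star g * h * g * q ≤ (star g * g) * 1 := UIQ.mul_mono hsr hq1
      _ = star g * g := mul_one _
  -- g * u * star g = x
  have hgu : g * (star g * h * g * q) * star g = h * g * q * star g := by
    have e : g * (star g * h * g * q) = h * g * q := by
      rw [← mul_assoc g (star g * h * g) q, hgs]
    rw [e]
  -- u ≤ q'
  have huq' : star g * h * g * q ≤ q' := by
    have h1 : star g * (g * (star g * h * g * q) * star g) * g = star g * h * g * q := by
      have e : star g * (g * (star g * h * g * q) * star g) * g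
          = (star g * g) * (star g * h * g * q) * (star g * g) := by
        simp only [mul_assoc]
      rw [e]
      have e2 : (star g * g) * (star g * h * g * q) = star g * h * g * q := by
        rw [SGF.sub_mul_inf hrg1 hu1]; exact inf_eq_right.mpr hurg
      rw [e2, SGF.sub_mul_inf hu1 hrg1]
      exact inf_eq_left.mpr hurg
    have hxp' : g * (star g * h * g * q) * star g ≤ p := by rw [hgu]; exact hxp
    calc star g * h * g * q
        = star g * (g * (star g * h * g * q) * star g) * g := h1.symm
      _ ≤ star g * p * g := UIQ.mul_mono (UIQ.mul_mono le_rfl hxp') le_rfl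
      _ = star g * (g * q') := by rw [mul_assoc, heqg]
      _ = (star g * g) * q' := (mul_assoc _ _ _).symm
      _ ≤ 1 * q' := UIQ.mul_mono hrg1 le_rfl
      _ = q' := one_mul q'
  have hinfq : (star g * h * g) ⊓ q ≤ q' := by
    rw [← SGF.sub_mul_inf hs1 hq1]; exact huq'
  have hsnq' : ¬ star g * h * g ≤ q' := by
    intro hle
    apply hhp
    have e1 : g * (star g * h * g) * star g = h := by
      rw [hgs, mul_assoc, SGF.sub_mul_inf hh1 hdg1]
      exact inf_eq_left.mpr hh
    calc h = g * (star g * h * g) * star g := e1.symm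
      _ ≤ g * q' * star g := UIQ.mul_mono (UIQ.mul_mono le_rfl hle) le_rfl
      _ = p * g * star g := by rw [← heqg]
      _ = p * (g * star g) := mul_assoc p g (star g)
      _ ≤ p * 1 := UIQ.mul_mono le_rfl hdg1
      _ = p := mul_one p
  rcases hq'.2.2 _ _ hs1 hq1 hinfq with h1 | h1
  · exact absurd h1 hsnq'
  · exact h1

/-- The incidence relation is symmetric (with the same witness `h`). -/
lemma SGF.symm {p f g h : Q} (hp1 : p ≤ 1) (hf : IsPU f) (hg : IsPU g)
    (hhf : h ≤ f * star f) (hh1 : h ≤ 1)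
    (hinc : h * f ≤ p * f ⊔ g) : h * g ≤ p * g ⊔ f := by
  have hdf1 : f * star f ≤ 1 := hf.2
  have hrf1 : star f * f ≤ 1 := hf.1
  have hsh : star h = h := SGF.sub_star hh1
  have hpu : IsPU (h * f) := by
    constructor
    · have e1 : star (h * f) * (h * f) = star f * (h * h) * f := by
        rw [star_mul, hsh]; simp only [mul_assoc]
      rw [e1, SGF.sub_idem hh1]
      calc star f * h * f ≤ star f * (f * star f) * f :=
          UIQ.mul_mono (UIQ.mul_mono le_rfl hhf) le_rfl
        _ = (star f * f) * (star f * f) := by simp only [mul_assoc]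
        _ ≤ 1 * 1 := UIQ.mul_mono hrf1 hrf1
        _ = 1 := one_mul 1
    · have e1 : (h * f) * star (h * f) = h * (f * star f) * h := by
        rw [star_mul, hsh]; simp only [mul_assoc]
      rw [e1]
      calc h * (f * star f) * h ≤ h * 1 * h := UIQ.mul_mono (UIQ.mul_mono le_rfl hdf1) le_rfl
        _ = h * h := by rw [mul_one]
        _ = h := SGF.sub_idem hh1
        _ ≤ 1 := hh1
  have h2 : h * f ≤ p * ⊤ ⊔ g := by
    refine hinc.trans (sup_le_sup_right ?_ g)
    exact UIQ.mul_mono le_rfl le_top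
  have h3 := SGFQuantale.sgf3 (h * f) g p hpu hg hp1 h2
  have h4 : h ≤ p ⊔ g * star f := by
    have e0 : h = (h * f) * star f := by
      rw [mul_assoc, SGF.sub_mul_inf hh1 hdf1]
      exact (inf_eq_left.mpr hhf).symm
    calc h = (h * f) * star f := e0
      _ ≤ (p * (h * f) ⊔ g) * star f := UIQ.mul_mono h3 le_rfl
      _ = p * (h * f) * star f ⊔ g * star f := UIQ.dist_r (star f) _ _
      _ ≤ p ⊔ g * star f := by
          apply sup_le_sup_right
          have e : p * (h * f) * star f = p * (h * (f * star f)) := by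
            simp only [mul_assoc]
          rw [e]
          calc p * (h * (f * star f)) ≤ p * (1 * 1) :=
              UIQ.mul_mono le_rfl (UIQ.mul_mono hh1 hdf1)
            _ = p := by rw [one_mul, mul_one]
  have h5 : h ≤ p ⊔ f * star g := by
    calc h = star h := hsh.symm
      _ ≤ star (p ⊔ g * star f) := UIQ.star_mono h4
      _ = star p ⊔ star (g * star f) := UIQ.star_sup _ _
      _ = p ⊔ f * star g := by rw [SGF.sub_star hp1, star_mul, star_star]
  calc h * g ≤ (p ⊔ f * star g) * g := UIQ.mul_mono h5 le_rfl
    _ = p * g ⊔ f * star g * g := UIQ.dist_r g _ _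
    _ ≤ p * g ⊔ f := by
        apply sup_le_sup_left
        calc f * star g * g = f * (star g * g) := mul_assoc _ _ _
          _ ≤ f * 1 := UIQ.mul_mono le_rfl hg.1
          _ = f := mul_one f

end SGFHelpers

/-- If `f ∼_p g`, then `f[p] = g[p]`. -/
theorem stmt13 (Q : Type*) [SGFQuantale Q] (p f g q q' : Q)
    (hp : IsPrimeE p) (hf : IsPU f) (hg : IsPU g)
    (hdf : ¬ f * star f ≤ p) (hdg : ¬ g * star g ≤ p)
    (hinc : Incident p f g)
    (hq : IsPrimeE q ∧ ¬ star f * f ≤ q ∧ p * f = f * q)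
    (hq' : IsPrimeE q' ∧ ¬ star g * g ≤ q' ∧ p * g = g * q') :
    q = q' := by
  obtain ⟨h, hh, hhp, hincf⟩ := hinc
  have hhf : h ≤ f * star f := hh.trans inf_le_left
  have hhg : h ≤ g * star g := hh.trans inf_le_right
  have hh1 : h ≤ 1 := hhf.trans hf.2
  have d1 : q' ≤ q := SGF.key hp.1 hq'.1.1 hq.1 hq'.2.2 hq.2.2 hf hhf hhp hincf
  have hincg : h * g ≤ p * g ⊔ f := SGF.symm hp.1 hf hg hhf hh1 hincf
  have d2 : q ≤ q' := SGF.key hp.1 hq.1.1 hq'.1 hq.2.2 hq'.2.2 hg hhg hhp hincg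
  exact le_antisymm d2 d1
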